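/- arXiv:1207.6698 — 2 statements merged into one kernel-verified Lean document; each statement's English description precedes it below -/
import Mathlib

section
/- Let 𝔠 ∈ J₀ be comparable. Then the set U = {B ∈ J₀ : B ⊆ 𝔠 or g(𝔠) ⊆ B} is a tower; consequently U = J₀. -/
/-!
The successor step is the only real one: if `B ⊊ 𝔠` and `𝔠 ⊆ g B`, then `g B = 𝔠`,
because `g B \ B` has at most one point and already contains a point of `𝔠 \ B`.
A union of sets each contained in `𝔠` or containing `g 𝔠` is again of this kind.
-/

/-- A subset `J` of `Z` is a tower if `∅ ∈ J`, `J` is closed under `g`, and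
the union of any chain (under inclusion) of elements of `J` belongs to `J`. -/
def IsTower {X : Type*} (Z : Set (Set X)) (g : Set X → Set X)
    (J : Set (Set X)) : Prop :=
  J ⊆ Z ∧ (∅ : Set X) ∈ J ∧ (∀ A ∈ J, g A ∈ J) ∧
    ∀ 𝒞 : Set (Set X), 𝒞 ⊆ J → IsChain (· ⊆ ·) 𝒞 → ⋃₀ 𝒞 ∈ J

open Set

theorem Set.subset_of_ssubset_of_subset_of_diff_subsingleton {X : Type*} {B C D : Set X}
    (hBC : B ⊂ C) (hCD : C ⊆ D) (hD : (D \ B).Subsingleton) : D ⊆ C := by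
  obtain ⟨y, hyC, hyB⟩ := exists_of_ssubset hBC
  intro x hxD
  by_contra hxC
  have hxB : x ∉ B := fun hxB => hxC (hBC.subset hxB)
  exact hxC (hD ⟨hxD, hxB⟩ ⟨hCD hyC, hyB⟩ ▸ hyC)

theorem Set.sUnion_subset_or_subset_sUnion {X : Type*} {𝒞 : Set (Set X)} {c d : Set X}
    (h𝒞 : ∀ B ∈ 𝒞, B ⊆ c ∨ d ⊆ B) : ⋃₀ 𝒞 ⊆ c ∨ d ⊆ ⋃₀ 𝒞 := by
  by_cases h : ∃ B ∈ 𝒞, ¬B ⊆ c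
  · obtain ⟨B, hB𝒞, hBc⟩ := h
    exact Or.inr (((h𝒞 B hB𝒞).resolve_left hBc).trans (subset_sUnion_of_mem hB𝒞))
  · exact Or.inl (sUnion_subset fun B hB => not_not.1 fun hBc => h ⟨B, hB, hBc⟩)

section Tower

variable {X : Type*} {Z : Set (Set X)} {g : Set X → Set X}

theorem isTower_self (h1 : (∅ : Set X) ∈ Z) (hg : ∀ A ∈ Z, g A ∈ Z)
    (h3 : ∀ 𝒞 : Set (Set X), 𝒞 ⊆ Z → IsChain (· ⊆ ·) 𝒞 → ⋃₀ 𝒞 ∈ Z) : IsTower Z g Z :=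
  ⟨subset_rfl, h1, hg, h3⟩

theorem IsTower.sInter {𝒯 : Set (Set (Set X))} (hne : 𝒯.Nonempty)
    (h𝒯 : ∀ J ∈ 𝒯, IsTower Z g J) : IsTower Z g (⋂₀ 𝒯) := by
  obtain ⟨J₁, hJ₁⟩ := hne
  refine ⟨(sInter_subset_of_mem hJ₁).trans (h𝒯 J₁ hJ₁).1,
    mem_sInter.2 fun J hJ => (h𝒯 J hJ).2.1,
    fun A hA => mem_sInter.2 fun J hJ => (h𝒯 J hJ).2.2.1 A (hA J hJ),
    fun 𝒞 h𝒞 hchain => mem_sInter.2 fun J hJ => ?_⟩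
  exact (h𝒯 J hJ).2.2.2 𝒞 (fun B hB => h𝒞 hB J hJ) hchain

theorem IsTower.sep_subset_or_apply_subset {J : Set (Set X)} (hJ : IsTower Z g J)
    (hg : ∀ A ∈ Z, A ⊆ g A ∧ (g A \ A).Subsingleton) {c : Set X}
    (hcomp : ∀ A ∈ J, A ⊆ c ∨ c ⊆ A) : IsTower Z g {B ∈ J | B ⊆ c ∨ g c ⊆ B} := by
  obtain ⟨hJZ, hJempty, hJg, hJchain⟩ := hJ
  refine ⟨fun B hB => hJZ hB.1, ⟨hJempty, Or.inl (empty_subset c)⟩,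
    fun B ⟨hBJ, hBc⟩ => ⟨hJg B hBJ, ?_⟩,
    fun 𝒞 h𝒞 hchain => ⟨hJchain 𝒞 (fun B hB => (h𝒞 hB).1) hchain,
      sUnion_subset_or_subset_sUnion fun B hB => (h𝒞 hB).2⟩⟩
  obtain ⟨hBgB, hgB⟩ := hg B (hJZ hBJ)
  rcases hBc with hBc | hgcB
  · rcases hcomp (g B) (hJg B hBJ) with hgBc | hcgB
    · exact Or.inl hgBc
    · rcases hBc.eq_or_ssubset with rfl | hBc
      · exact Or.inr subset_rfl
      · exact Or.inl (subset_of_ssubset_of_subset_of_diff_subsingleton hBc hcgB hgB)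
  · exact Or.inr (hgcB.trans hBgB)

end Tower

theorem U_is_tower_general {X : Type*} (Z : Set (Set X))
    (h1 : (∅ : Set X) ∈ Z)
    (h3 : ∀ 𝒞 : Set (Set X), 𝒞 ⊆ Z → IsChain (· ⊆ ·) 𝒞 → ⋃₀ 𝒞 ∈ Z)
    (g : Set X → Set X)
    (hg : ∀ A ∈ Z, g A ∈ Z ∧ A ⊆ g A ∧ (g A \ A).Subsingleton)
    (J₀ : Set (Set X)) (hJ₀ : J₀ = ⋂₀ {J : Set (Set X) | IsTower Z g J})
    (𝔠 : Set X) (hcomp : ∀ A ∈ J₀, A ⊆ 𝔠 ∨ 𝔠 ⊆ A) :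
    IsTower Z g {B ∈ J₀ | B ⊆ 𝔠 ∨ g 𝔠 ⊆ B} ∧
      {B ∈ J₀ | B ⊆ 𝔠 ∨ g 𝔠 ⊆ B} = J₀ := by
  subst hJ₀
  have hZ : IsTower Z g Z := isTower_self h1 (fun A hA => (hg A hA).1) h3
  have hJ₀ : IsTower Z g (⋂₀ {J | IsTower Z g J}) := IsTower.sInter ⟨Z, hZ⟩ fun _ hJ => hJ
  have hU := hJ₀.sep_subset_or_apply_subset (fun A hA => (hg A hA).2) hcomp
  exact ⟨hU, (sep_subset _ _).antisymm (sInter_subset_of_mem hU)⟩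

/-- If `𝔠 ∈ J₀` is comparable, then `U = {B ∈ J₀ : B ⊆ 𝔠 ∨ g 𝔠 ⊆ B}` is a
tower; consequently `U = J₀`. -/
theorem U_is_tower {X : Type*} (Z : Set (Set X))
    (h1 : (∅ : Set X) ∈ Z)
    (h2 : ∀ A ∈ Z, ∀ B : Set X, B ⊆ A → B ∈ Z)
    (h3 : ∀ 𝒞 : Set (Set X), 𝒞 ⊆ Z → IsChain (· ⊆ ·) 𝒞 → ⋃₀ 𝒞 ∈ Z)
    (g : Set X → Set X)
    (hg : ∀ A ∈ Z, g A ∈ Z ∧ A ⊆ g A ∧ (g A \ A).Subsingleton)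
    (J₀ : Set (Set X)) (hJ₀ : J₀ = ⋂₀ {J : Set (Set X) | IsTower Z g J})
    (𝔠 : Set X) (h𝔠 : 𝔠 ∈ J₀) (hcomp : ∀ A ∈ J₀, A ⊆ 𝔠 ∨ 𝔠 ⊆ A) :
    IsTower Z g {B ∈ J₀ | B ⊆ 𝔠 ∨ g 𝔠 ⊆ B} ∧
      {B ∈ J₀ | B ⊆ 𝔠 ∨ g 𝔠 ⊆ B} = J₀ :=
  U_is_tower_general Z h1 h3 g hg J₀ hJ₀ 𝔠 hcomp
end

section
/- J₀ is a chain: any two elements of J₀ are comparable under inclusion, i.e., for all A, B ∈ J₀, either A ⊆ B or B ⊆ A. -/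
theorem Set.subset_or_subset_of_subset_of_diff_subsingleton {X : Type*} {A B C : Set X}
    (hAC : A ⊆ C) (hCB : C ⊆ B) (hBA : (B \ A).Subsingleton) : C ⊆ A ∨ B ⊆ C := by
  refine or_iff_not_imp_left.2 fun hCA y hyB => ?_
  obtain ⟨x, hxC, hxA⟩ := Set.not_subset.1 hCA
  by_cases hyA : y ∈ A
  · exact hAC hyA
  · rwa [hBA ⟨hyB, hyA⟩ ⟨hCB hxC, hxA⟩]

namespace IsTower

variable {X : Type*} {Z : Set (Set X)} {g : Set X → Set X}

theorem sInter_s14 {T : Set (Set (Set X))} (hT : T.Nonempty) (h : ∀ J ∈ T, IsTower Z g J) :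
    IsTower Z g (⋂₀ T) := by
  obtain ⟨J, hJ⟩ := hT
  refine ⟨(Set.sInter_subset_of_mem hJ).trans (h J hJ).1,
    Set.mem_sInter.2 fun J hJ => (h J hJ).2.1, fun A hA => ?_, fun 𝒞 h𝒞 hchain => ?_⟩
  · exact Set.mem_sInter.2 fun J hJ => (h J hJ).2.2.1 A (Set.mem_sInter.1 hA J hJ)
  · exact Set.mem_sInter.2 fun J hJ =>
      (h J hJ).2.2.2 𝒞 (fun A hA => Set.mem_sInter.1 (h𝒞 hA) J hJ) hchain

end IsTower

/-- The smallest tower `J₀`. -/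
def minTower {X : Type*} (Z : Set (Set X)) (g : Set X → Set X) : Set (Set X) :=
  ⋂₀ {J | IsTower Z g J}

namespace minTower

variable {X : Type*} {Z : Set (Set X)} {g : Set X → Set X}

theorem subset_of_isTower {J : Set (Set X)} (hJ : IsTower Z g J) : minTower Z g ⊆ J :=
  Set.sInter_subset_of_mem hJ

theorem isTower (hZ : IsTower Z g Z) : IsTower Z g (minTower Z g) :=
  IsTower.sInter_s14 ⟨Z, hZ⟩ fun _ hJ => hJ

theorem induction (hZ : IsTower Z g Z) {P : Set X → Prop} (empty : P ∅)
    (succ : ∀ A ∈ minTower Z g, P A → P (g A))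
    (sUnion : ∀ 𝒞 ⊆ minTower Z g, IsChain (· ⊆ ·) 𝒞 → (∀ A ∈ 𝒞, P A) → P (⋃₀ 𝒞)) :
    ∀ A ∈ minTower Z g, P A := by
  obtain ⟨hMZ, hMempty, hMg, hMU⟩ := isTower hZ
  have hS : IsTower Z g {A | A ∈ minTower Z g ∧ P A} :=
    ⟨fun A hA => hMZ hA.1, ⟨hMempty, empty⟩, fun A hA => ⟨hMg A hA.1, succ A hA.1 hA.2⟩,
      fun 𝒞 h𝒞 hchain => ⟨hMU 𝒞 (fun A hA => (h𝒞 hA).1) hchain,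
        sUnion 𝒞 (fun A hA => (h𝒞 hA).1) hchain fun A hA => (h𝒞 hA).2⟩⟩
  exact fun A hA => (subset_of_isTower hS hA).2

theorem subset_or_succ_subset (hZ : IsTower Z g Z)
    (hg : ∀ A ∈ Z, A ⊆ g A ∧ (g A \ A).Subsingleton) {C : Set X}
    (hCcomp : ∀ A ∈ minTower Z g, A ⊆ C ∨ C ⊆ A) :
    ∀ A ∈ minTower Z g, A ⊆ C ∨ g C ⊆ A := by
  have hMZ := (isTower hZ).1
  refine induction hZ (Or.inl (Set.empty_subset C)) (fun A hA ih => ?_) fun 𝒞 _ _ ih => ?_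
  · rcases ih with hAC | hgCA
    · rcases hCcomp (g A) ((isTower hZ).2.2.1 A hA) with hgAC | hCgA
      · exact Or.inl hgAC
      · rcases Set.subset_or_subset_of_subset_of_diff_subsingleton hAC hCgA (hg A (hMZ hA)).2
          with hCA | hgAC
        · exact Or.inr (hAC.antisymm hCA ▸ subset_rfl)
        · exact Or.inl hgAC
    · exact Or.inr (hgCA.trans (hg A (hMZ hA)).1)
  · by_cases hall : ∀ A ∈ 𝒞, A ⊆ C
    · exact Or.inl (Set.sUnion_subset hall)
    · push Not at hall
      obtain ⟨A, hA𝒞, hAC⟩ := hall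
      exact Or.inr (((ih A hA𝒞).resolve_left hAC).trans (Set.subset_sUnion_of_mem hA𝒞))

theorem isChain (hZ : IsTower Z g Z)
    (hg : ∀ A ∈ Z, A ⊆ g A ∧ (g A \ A).Subsingleton) : IsChain (· ⊆ ·) (minTower Z g) := by
  suffices h : ∀ C ∈ minTower Z g, ∀ A ∈ minTower Z g, A ⊆ C ∨ C ⊆ A from
    fun C hC A hA _ => (h C hC A hA).symm
  refine induction hZ (fun A _ => Or.inr (Set.empty_subset A))
    (fun C hC ih A hA => ?_) fun 𝒞 _ _ ih A hA => ?_
  · rcases subset_or_succ_subset hZ hg ih A hA with hAC | hgCA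
    · exact Or.inl (hAC.trans (hg C ((isTower hZ).1 hC)).1)
    · exact Or.inr hgCA
  · by_cases hex : ∃ C ∈ 𝒞, A ⊆ C
    · obtain ⟨C, hC𝒞, hAC⟩ := hex
      exact Or.inl (hAC.trans (Set.subset_sUnion_of_mem hC𝒞))
    · push Not at hex
      exact Or.inr (Set.sUnion_subset fun C hC𝒞 => ((ih C hC𝒞) A hA).resolve_left (hex C hC𝒞))

end minTower

theorem J0_is_chain_general {X : Type*} (Z : Set (Set X))
    (h1 : (∅ : Set X) ∈ Z)
    (h3 : ∀ 𝒞 : Set (Set X), 𝒞 ⊆ Z → IsChain (· ⊆ ·) 𝒞 → ⋃₀ 𝒞 ∈ Z)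
    (g : Set X → Set X)
    (hg : ∀ A ∈ Z, g A ∈ Z ∧ A ⊆ g A ∧ (g A \ A).Subsingleton)
    (J₀ : Set (Set X)) (hJ₀ : J₀ = ⋂₀ {J : Set (Set X) | IsTower Z g J}) :
    ∀ A ∈ J₀, ∀ B ∈ J₀, A ⊆ B ∨ B ⊆ A := by
  subst hJ₀
  have hZ : IsTower Z g Z := ⟨subset_rfl, h1, fun A hA => (hg A hA).1, h3⟩
  exact fun A hA B hB => (minTower.isChain hZ fun A hA => (hg A hA).2).total hA hB

/-- `J₀` is a chain: any two elements of `J₀` are comparable under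
inclusion. -/
theorem J0_is_chain {X : Type*} (Z : Set (Set X))
    (h1 : (∅ : Set X) ∈ Z)
    (h2 : ∀ A ∈ Z, ∀ B : Set X, B ⊆ A → B ∈ Z)
    (h3 : ∀ 𝒞 : Set (Set X), 𝒞 ⊆ Z → IsChain (· ⊆ ·) 𝒞 → ⋃₀ 𝒞 ∈ Z)
    (g : Set X → Set X)
    (hg : ∀ A ∈ Z, g A ∈ Z ∧ A ⊆ g A ∧ (g A \ A).Subsingleton)
    (J₀ : Set (Set X)) (hJ₀ : J₀ = ⋂₀ {J : Set (Set X) | IsTower Z g J}) :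
    ∀ A ∈ J₀, ∀ B ∈ J₀, A ⊆ B ∨ B ⊆ A :=
  J0_is_chain_general Z h1 h3 g hg J₀ hJ₀
end
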